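/- Let V and V' be real inner product spaces of the same finite dimension 2q carrying nondegenerate alternating bilinear forms ω and ω', with associated invertible linear maps J, J' (determined by ω(v,w) = ⟨Jv,w⟩ and ω'(v,w) = ⟨J'v,w⟩), and let C ≥ max(‖J‖, ‖J⁻¹‖, ‖J'‖, ‖(J')⁻¹‖). Let E, F ⊂ V be Lagrangian subspaces with E ∩ F = {0}, set α = ∠(E,F), and let S : V → V' be a symplectic linear map, i.e. ω'(Su, Sv) = ω(u,v) for all u,v ∈ V (so S is invertible). Set β = ∠(S(E), S(F)). Then C⁻² · sin α ≤ 𝐦(S|_E) · ‖S|_F‖ ≤ C² · (sin β)⁻¹, where S|_E : E → S(E) and S|_F : F → S(F) denote the restrictions. -/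

import Mathlib

open InnerProductGeometry RealInnerProductSpace

/-- Angle between two nontrivial subspaces: infimum of angles between nonzero vectors. -/
noncomputable def angleSS {V : Type*} [NormedAddCommGroup V] [InnerProductSpace ℝ V]
    (E F : Submodule ℝ V) : ℝ :=
  sInf {θ : ℝ | ∃ u ∈ E, ∃ v ∈ F, u ≠ 0 ∧ v ≠ 0 ∧ θ = angle u v}

/-- The operator norm of a linear map between finite-dimensional normed spaces. -/
noncomputable def opN {E F : Type*} [NormedAddCommGroup E] [NormedSpace ℝ E]
    [FiniteDimensional ℝ E] [NormedAddCommGroup F] [NormedSpace ℝ F]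
    (T : E →ₗ[ℝ] F) : ℝ :=
  ‖LinearMap.toContinuousLinearMap T‖

set_option maxHeartbeats 1000000

section Aux

variable {W : Type*} [NormedAddCommGroup W] [InnerProductSpace ℝ W]

lemma sin_angle_norm_le (x y : W) : Real.sin (angle x y) * ‖x‖ ≤ ‖x - y‖ := by
  by_cases hy : y = 0
  · subst hy
    rw [angle_zero_right, Real.sin_pi_div_two, one_mul, sub_zero]
  · have hy' : 0 < ‖y‖ := norm_pos_iff.mpr hy
    rw [← mul_le_mul_iff_of_pos_right hy', mul_assoc]
    rw [sin_angle_mul_norm_mul_norm]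
    have h1 : √(⟪x, x⟫ * ⟪y, y⟫ - ⟪x, y⟫ * ⟪x, y⟫) ≤ √((‖x - y‖ * ‖y‖) ^ 2) := by
      apply Real.sqrt_le_sqrt
      have e1 : ⟪x, x⟫ = ‖x‖ ^ 2 := real_inner_self_eq_norm_sq x
      have e2 : ⟪y, y⟫ = ‖y‖ ^ 2 := real_inner_self_eq_norm_sq y
      have e3 : ‖x - y‖ ^ 2 = ‖x‖ ^ 2 - 2 * ⟪x, y⟫ + ‖y‖ ^ 2 := norm_sub_sq_real x y
      nlinarith [sq_nonneg (‖y‖ ^ 2 - ⟪x, y⟫)]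
    calc √(⟪x, x⟫ * ⟪y, y⟫ - ⟪x, y⟫ * ⟪x, y⟫) ≤ √((‖x - y‖ * ‖y‖) ^ 2) := h1
      _ = ‖x - y‖ * ‖y‖ := Real.sqrt_sq (by positivity)

lemma sin_mono_aux {s θ : ℝ} (h0 : 0 ≤ s) (h1 : s ≤ θ) (h2 : θ ≤ Real.pi - s) :
    Real.sin s ≤ Real.sin θ := by
  have hpi := Real.pi_pos
  rcases le_or_gt θ (Real.pi / 2) with h | h
  · exact Real.strictMonoOn_sin.monotoneOn ⟨by linarith, by linarith⟩ ⟨by linarith, h⟩ h1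
  · rw [← Real.sin_pi_sub θ]
    exact Real.strictMonoOn_sin.monotoneOn ⟨by linarith, by linarith⟩
      ⟨by linarith, by linarith⟩ (by linarith)

lemma angleSS_bddBelow (E F : Submodule ℝ W) :
    BddBelow {θ : ℝ | ∃ u ∈ E, ∃ v ∈ F, u ≠ 0 ∧ v ≠ 0 ∧ θ = angle u v} :=
  ⟨0, fun _ ⟨u, _, v, _, _, _, h⟩ => h ▸ angle_nonneg u v⟩

lemma angleSS_le {E F : Submodule ℝ W} {u v : W} (hu : u ∈ E) (hv : v ∈ F)
    (hu0 : u ≠ 0) (hv0 : v ≠ 0) : angleSS E F ≤ angle u v :=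
  csInf_le (angleSS_bddBelow E F) ⟨u, hu, v, hv, hu0, hv0, rfl⟩

lemma angleSS_nonneg (E F : Submodule ℝ W) : 0 ≤ angleSS E F :=
  Real.sInf_nonneg (fun _ ⟨u, _, v, _, _, _, h⟩ => h ▸ angle_nonneg u v)

lemma angleSS_comm (E F : Submodule ℝ W) : angleSS E F = angleSS F E := by
  unfold angleSS
  congr 1
  ext θ
  constructor
  · rintro ⟨u, hu, v, hv, hu0, hv0, rfl⟩
    exact ⟨v, hv, u, hu, hv0, hu0, angle_comm u v⟩
  · rintro ⟨u, hu, v, hv, hu0, hv0, rfl⟩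
    exact ⟨v, hv, u, hu, hv0, hu0, angle_comm u v⟩

lemma core_lemma (ω : LinearMap.BilinForm ℝ W) (J : W ≃L[ℝ] W)
    (hJ : ∀ v w, ω v w = ⟪J v, w⟫)
    (A B : Submodule ℝ W) (hiso : ∀ x ∈ A, ∀ y ∈ A, ω x y = 0) (hsup : A ⊔ B = ⊤)
    {a : W} (ha : a ∈ A) (ha0 : a ≠ 0) :
    ∃ b ∈ B, b ≠ 0 ∧ ω a b = ‖J a‖ ^ 2 ∧ ‖b‖ * Real.sin (angleSS A B) ≤ ‖J a‖ := by
  have hmem : (J a : W) ∈ A ⊔ B := hsup ▸ Submodule.mem_top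
  obtain ⟨e, he, b, hb, heb⟩ := Submodule.mem_sup.mp hmem
  have hwA : ∀ x ∈ A, ⟪(J a : W), x⟫ = 0 := fun x hx => by rw [← hJ]; exact hiso a ha x hx
  have hJa0 : (J a : W) ≠ 0 := fun h => ha0 (by simpa using congrArg J.symm h)
  have hb0 : b ≠ 0 := by
    intro h
    rw [h, add_zero] at heb
    apply hJa0
    have : ⟪(J a : W), (J a : W)⟫ = 0 := hwA _ (heb ▸ he)
    exact inner_self_eq_zero.mp this
  have hbe : b = J a - e := by rw [← heb]; abel
  have hωab : ω a b = ‖J a‖ ^ 2 := by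
    rw [hJ, hbe, inner_sub_right, hwA e he, sub_zero, real_inner_self_eq_norm_sq]
  refine ⟨b, hb, hb0, hωab, ?_⟩
  by_cases he0 : e = 0
  · rw [he0, zero_add] at heb
    rw [heb]
    exact mul_le_of_le_one_right (norm_nonneg _) (Real.sin_le_one _)
  · set s := angleSS A B with hs
    have hs0 : 0 ≤ s := angleSS_nonneg A B
    have h1 : s ≤ angle (-e) b := angleSS_le (A.neg_mem he) hb (neg_ne_zero.mpr he0) hb0
    have h2 : s ≤ angle e b := angleSS_le he hb he0 hb0
    have h3 : angle b (-e) = Real.pi - angle b e := angle_neg_right b e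
    have hmono : Real.sin s ≤ Real.sin (angle b (-e)) := by
      apply sin_mono_aux hs0
      · rw [angle_comm]; exact h1
      · rw [h3]; rw [angle_comm b e]; linarith [h2]
    calc ‖b‖ * Real.sin s ≤ ‖b‖ * Real.sin (angle b (-e)) :=
          mul_le_mul_of_nonneg_left hmono (norm_nonneg b)
      _ = Real.sin (angle b (-e)) * ‖b‖ := mul_comm _ _
      _ ≤ ‖b - -e‖ := sin_angle_norm_le b (-e)
      _ = ‖J a‖ := by rw [sub_neg_eq_add, ← heb, add_comm]

lemma angleSS_pos [FiniteDimensional ℝ W] {A B : Submodule ℝ W} (hAB : A ⊓ B = ⊥)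
    {a b : W} (haA : a ∈ A) (ha0 : a ≠ 0) (hbB : b ∈ B) (hb0 : b ≠ 0) :
    0 < angleSS A B := by
  set K : Set (W × W) :=
    (Metric.sphere (0:W) 1 ∩ (A : Set W)) ×ˢ (Metric.sphere (0:W) 1 ∩ (B : Set W)) with hK
  have hKc : IsCompact K :=
    ((isCompact_sphere (0:W) 1).inter_right A.closed_of_finiteDimensional).prod
      ((isCompact_sphere (0:W) 1).inter_right B.closed_of_finiteDimensional)
  have hunit : ∀ (x : W), x ≠ 0 → ‖x‖⁻¹ • x ∈ Metric.sphere (0:W) 1 := by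
    intro x hx
    rw [mem_sphere_zero_iff_norm, norm_smul, norm_inv, norm_norm,
      inv_mul_cancel₀ (norm_ne_zero_iff.mpr hx)]
  have hKne : K.Nonempty := by
    refine ⟨(‖a‖⁻¹ • a, ‖b‖⁻¹ • b), ⟨hunit a ha0, A.smul_mem _ haA⟩,
      ⟨hunit b hb0, B.smul_mem _ hbB⟩⟩
  have hcont : ContinuousOn (fun p : W × W => angle p.1 p.2) K := by
    intro p hp
    have h1 : p.1 ≠ 0 := by
      have := hp.1.1; rw [mem_sphere_zero_iff_norm] at this
      exact norm_ne_zero_iff.mp (this ▸ one_ne_zero)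
    have h2 : p.2 ≠ 0 := by
      have := hp.2.1; rw [mem_sphere_zero_iff_norm] at this
      exact norm_ne_zero_iff.mp (this ▸ one_ne_zero)
    exact (continuousAt_angle h1 h2).continuousWithinAt
  obtain ⟨p₀, hp₀K, hmin⟩ := hKc.exists_isMinOn hKne hcont
  rw [isMinOn_iff] at hmin
  have hθ₀pos : 0 < angle p₀.1 p₀.2 := by
    rcases (angle_nonneg p₀.1 p₀.2).lt_or_eq with h | h
    · exact h
    · exfalso
      obtain ⟨h10, r, hr, hrel⟩ := angle_eq_zero_iff.mp h.symm
      have hp2A : p₀.2 ∈ A := hrel ▸ A.smul_mem r hp₀K.1.2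
      have hp2bot : p₀.2 ∈ A ⊓ B := ⟨hp2A, hp₀K.2.2⟩
      rw [hAB] at hp2bot
      have : p₀.2 = 0 := hp2bot
      have := hp₀K.2.1
      rw [mem_sphere_zero_iff_norm] at this
      simp [‹p₀.2 = 0›] at this
  have hle : angle p₀.1 p₀.2 ≤ angleSS A B := by
    unfold angleSS
    refine le_csInf ⟨angle a b, a, haA, b, hbB, ha0, hb0, rfl⟩ ?_
    rintro θ ⟨u, hu, v, hv, hu0, hv0, rfl⟩
    have hnorm : angle u v = angle (‖u‖⁻¹ • u) (‖v‖⁻¹ • v) := by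
      rw [angle_smul_left_of_pos _ _ (inv_pos.mpr (norm_pos_iff.mpr hu0)),
        angle_smul_right_of_pos _ _ (inv_pos.mpr (norm_pos_iff.mpr hv0))]
    rw [hnorm]
    have hmem : ((‖u‖⁻¹ • u, ‖v‖⁻¹ • v) : W × W) ∈ K :=
      Set.mem_prod.mpr ⟨⟨hunit u hu0, A.smul_mem _ hu⟩, ⟨hunit v hv0, B.smul_mem _ hv⟩⟩
    have h5 := hmin _ hmem
    simp only at h5
    exact h5
  linarith

end Aux

section OpN

variable {V V' : Type*} [NormedAddCommGroup V] [InnerProductSpace ℝ V] [FiniteDimensional ℝ V]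
  [NormedAddCommGroup V'] [InnerProductSpace ℝ V'] [FiniteDimensional ℝ V']

lemma opN_eq_zero {E F : Type*} [NormedAddCommGroup E] [NormedSpace ℝ E]
    [FiniteDimensional ℝ E] [NormedAddCommGroup F] [NormedSpace ℝ F]
    (T : E →ₗ[ℝ] F) (h : ∀ x, T x = 0) : opN T = 0 := by
  apply le_antisymm _ (norm_nonneg _)
  apply ContinuousLinearMap.opNorm_le_bound _ le_rfl
  intro x
  simp [h x]

lemma norm_le_opN_symm_mul (S : V ≃ₗ[ℝ] V') (E : Submodule ℝ V) (u : V) (hu : u ∈ E) :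
    ‖u‖ ≤ opN ((S.submoduleMap E).symm : ↥(E.map (S : V →ₗ[ℝ] V')) →ₗ[ℝ] E) * ‖S u‖ := by
  have hx : (S : V →ₗ[ℝ] V') u ∈ E.map (S : V →ₗ[ℝ] V') := ⟨u, hu, rfl⟩
  have h1 := (LinearMap.toContinuousLinearMap
    ((S.submoduleMap E).symm : ↥(E.map (S : V →ₗ[ℝ] V')) →ₗ[ℝ] E)).le_opNorm
    ⟨(S : V →ₗ[ℝ] V') u, hx⟩
  simp only [LinearMap.coe_toContinuousLinearMap', LinearEquiv.coe_coe, Submodule.coe_norm,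
    LinearEquiv.submoduleMap_symm_apply, LinearEquiv.symm_apply_apply] at h1
  exact h1

lemma norm_opN_map_mul (S : V ≃ₗ[ℝ] V') (F : Submodule ℝ V) (v : V) (hv : v ∈ F) :
    ‖S v‖ ≤ opN ((S.submoduleMap F) : F →ₗ[ℝ] ↥(F.map (S : V →ₗ[ℝ] V'))) * ‖v‖ := by
  have h1 := (LinearMap.toContinuousLinearMap
    ((S.submoduleMap F) : F →ₗ[ℝ] ↥(F.map (S : V →ₗ[ℝ] V')))).le_opNorm ⟨v, hv⟩
  simp only [LinearMap.coe_toContinuousLinearMap', LinearEquiv.coe_coe, Submodule.coe_norm,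
    LinearEquiv.submoduleMap_apply] at h1
  exact h1

lemma opN_symm_le (S : V ≃ₗ[ℝ] V') (E : Submodule ℝ V) {K : ℝ} (hK : 0 ≤ K)
    (h : ∀ u ∈ E, ‖u‖ ≤ K * ‖S u‖) :
    opN ((S.submoduleMap E).symm : ↥(E.map (S : V →ₗ[ℝ] V')) →ₗ[ℝ] E) ≤ K := by
  apply ContinuousLinearMap.opNorm_le_bound _ hK
  rintro ⟨x, hx⟩
  obtain ⟨u, hu, rfl⟩ := hx
  have := h u hu
  simp only [LinearMap.coe_toContinuousLinearMap', LinearEquiv.coe_coe, Submodule.coe_norm,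
    LinearEquiv.submoduleMap_symm_apply, LinearEquiv.symm_apply_apply]
  simpa using this

lemma opN_map_le (S : V ≃ₗ[ℝ] V') (F : Submodule ℝ V) {K : ℝ} (hK : 0 ≤ K)
    (h : ∀ v ∈ F, ‖S v‖ ≤ K * ‖v‖) :
    opN ((S.submoduleMap F) : F →ₗ[ℝ] ↥(F.map (S : V →ₗ[ℝ] V'))) ≤ K := by
  apply ContinuousLinearMap.opNorm_le_bound _ hK
  rintro ⟨v, hv⟩
  have := h v hv
  simp only [LinearMap.coe_toContinuousLinearMap', LinearEquiv.coe_coe, Submodule.coe_norm,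
    LinearEquiv.submoduleMap_apply]
  simpa using this

end OpN

theorem stmt6 {V V' : Type*}
    [NormedAddCommGroup V] [InnerProductSpace ℝ V] [FiniteDimensional ℝ V]
    [NormedAddCommGroup V'] [InnerProductSpace ℝ V'] [FiniteDimensional ℝ V']
    (q : ℕ) (hdim : Module.finrank ℝ V = 2 * q) (hdim' : Module.finrank ℝ V' = 2 * q)
    (ω : LinearMap.BilinForm ℝ V) (ω' : LinearMap.BilinForm ℝ V')
    (halt : ∀ v, ω v v = 0) (hnd : ω.Nondegenerate)
    (halt' : ∀ v, ω' v v = 0) (hnd' : ω'.Nondegenerate)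
    (J : V ≃L[ℝ] V) (hJ : ∀ v w, ω v w = ⟪J v, w⟫)
    (J' : V' ≃L[ℝ] V') (hJ' : ∀ v w, ω' v w = ⟪J' v, w⟫)
    (C : ℝ)
    (hC : max (max ‖(J : V →L[ℝ] V)‖ ‖(J.symm : V →L[ℝ] V)‖)
              (max ‖(J' : V' →L[ℝ] V')‖ ‖(J'.symm : V' →L[ℝ] V')‖) ≤ C)
    (E F : Submodule ℝ V)
    (hE : E = ω.orthogonal E) (hF : F = ω.orthogonal F)
    (hEF : E ⊓ F = ⊥)
    (α : ℝ) (hα : α = angleSS E F)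
    (S : V ≃ₗ[ℝ] V') (hS : ∀ u v, ω' (S u) (S v) = ω u v)
    (β : ℝ) (hβ : β = angleSS (E.map (S : V →ₗ[ℝ] V')) (F.map (S : V →ₗ[ℝ] V'))) :
    (C ^ 2)⁻¹ * Real.sin α ≤
        (opN ((S.submoduleMap E).symm : ↥(E.map (S : V →ₗ[ℝ] V')) →ₗ[ℝ] E))⁻¹ *
          opN ((S.submoduleMap F) : F →ₗ[ℝ] ↥(F.map (S : V →ₗ[ℝ] V'))) ∧
      (opN ((S.submoduleMap E).symm : ↥(E.map (S : V →ₗ[ℝ] V')) →ₗ[ℝ] E))⁻¹ *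
          opN ((S.submoduleMap F) : F →ₗ[ℝ] ↥(F.map (S : V →ₗ[ℝ] V'))) ≤
        C ^ 2 * (Real.sin β)⁻¹ := by
  by_cases hEbot : E = ⊥
  · -- degenerate case: V is trivial
    have hTopBot : (⊥ : Submodule ℝ V) = ⊤ := by
      rw [← hEbot, hE, hEbot]
      ext x
      simp [LinearMap.BilinForm.mem_orthogonal_iff]
    have hV0 : ∀ v : V, v = 0 := fun v => by
      have h : v ∈ (⊥ : Submodule ℝ V) := hTopBot.symm ▸ Submodule.mem_top
      simpa using h
    have hsub : Subsingleton V := ⟨fun a b => by rw [hV0 a, hV0 b]⟩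
    have hfr0 : Module.finrank ℝ V = 0 := by
      rw [Module.finrank_zero_iff.mpr hsub]
    have hsub' : Subsingleton V' := by
      apply Module.finrank_zero_iff (R := ℝ).mp
      omega
    have hV'0 : ∀ v : V', v = 0 := fun v => Subsingleton.elim v 0
    have hAN0 : opN ((S.submoduleMap E).symm : ↥(E.map (S : V →ₗ[ℝ] V')) →ₗ[ℝ] E) = 0 :=
      opN_eq_zero _ (fun x => Subtype.ext (hV0 _))
    have hBN0 : opN ((S.submoduleMap F) : F →ₗ[ℝ] ↥(F.map (S : V →ₗ[ℝ] V'))) = 0 :=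
      opN_eq_zero _ (fun x => Subtype.ext (hV'0 _))
    have hα0 : α = 0 := by
      rw [hα]
      unfold angleSS
      have hempty : {θ : ℝ | ∃ u ∈ E, ∃ v ∈ F, u ≠ 0 ∧ v ≠ 0 ∧ θ = angle u v} = ∅ := by
        ext θ
        simp only [Set.mem_setOf_eq, Set.mem_empty_iff_false, iff_false]
        rintro ⟨u, _, v, _, hu0, _, _⟩
        exact hu0 (hV0 u)
      rw [hempty, Real.sInf_empty]
    have hβ0 : β = 0 := by
      rw [hβ]
      unfold angleSS
      have hempty : {θ : ℝ | ∃ u ∈ E.map (S : V →ₗ[ℝ] V'), ∃ v ∈ F.map (S : V →ₗ[ℝ] V'),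
          u ≠ 0 ∧ v ≠ 0 ∧ θ = angle u v} = ∅ := by
        ext θ
        simp only [Set.mem_setOf_eq, Set.mem_empty_iff_false, iff_false]
        rintro ⟨u, _, v, _, hu0, _, _⟩
        exact hu0 (hV'0 u)
      rw [hempty, Real.sInf_empty]
    rw [hα0, hβ0, hAN0, hBN0]
    simp
  · -- main case
    -- basic norm facts about C
    have hCJ1 : ‖(J : V →L[ℝ] V)‖ ≤ C := le_trans (le_trans (le_max_left _ _) (le_max_left _ _)) hC
    have hCJ2 : ‖(J.symm : V →L[ℝ] V)‖ ≤ C :=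
      le_trans (le_trans (le_max_right _ _) (le_max_left _ _)) hC
    have hCJ3 : ‖(J' : V' →L[ℝ] V')‖ ≤ C :=
      le_trans (le_trans (le_max_left _ _) (le_max_right _ _)) hC
    have hCJ4 : ‖(J'.symm : V' →L[ℝ] V')‖ ≤ C :=
      le_trans (le_trans (le_max_right _ _) (le_max_right _ _)) hC
    have hC0 : 0 ≤ C := le_trans (norm_nonneg _) hCJ1
    have hJapp : ∀ v : V, ‖J v‖ ≤ C * ‖v‖ := fun v => by
      have h := (J : V →L[ℝ] V).le_opNorm v
      simp only [ContinuousLinearEquiv.coe_coe] at h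
      exact le_trans h (mul_le_mul_of_nonneg_right hCJ1 (norm_nonneg v))
    have hJinv : ∀ v : V, ‖v‖ ≤ C * ‖J v‖ := fun v => by
      have h := (J.symm : V →L[ℝ] V).le_opNorm (J v)
      simp only [ContinuousLinearEquiv.coe_coe, ContinuousLinearEquiv.symm_apply_apply] at h
      exact le_trans h (mul_le_mul_of_nonneg_right hCJ2 (norm_nonneg _))
    have hJ'app : ∀ v : V', ‖J' v‖ ≤ C * ‖v‖ := fun v => by
      have h := (J' : V' →L[ℝ] V').le_opNorm v
      simp only [ContinuousLinearEquiv.coe_coe] at h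
      exact le_trans h (mul_le_mul_of_nonneg_right hCJ3 (norm_nonneg v))
    have hJ'inv : ∀ v : V', ‖v‖ ≤ C * ‖J' v‖ := fun v => by
      have h := (J'.symm : V' →L[ℝ] V').le_opNorm (J' v)
      simp only [ContinuousLinearEquiv.coe_coe, ContinuousLinearEquiv.symm_apply_apply] at h
      exact le_trans h (mul_le_mul_of_nonneg_right hCJ4 (norm_nonneg _))
    -- isotropy
    have hisoE : ∀ x ∈ E, ∀ y ∈ E, ω x y = 0 := by
      intro x hx y hy
      rw [hE] at hy
      exact (LinearMap.BilinForm.mem_orthogonal_iff.mp hy) x hx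
    have hisoF : ∀ x ∈ F, ∀ y ∈ F, ω x y = 0 := by
      intro x hx y hy
      rw [hF] at hy
      exact (LinearMap.BilinForm.mem_orthogonal_iff.mp hy) x hx
    -- dimensions
    have hrefl : ω.IsRefl := LinearMap.IsAlt.isRefl halt
    have hrE : Module.finrank ℝ E = q := by
      have h := LinearMap.BilinForm.finrank_orthogonal hnd E
      rw [← hE] at h
      have h2 := Submodule.finrank_le E
      rw [hdim] at h h2
      omega
    have hrF : Module.finrank ℝ F = q := by
      have h := LinearMap.BilinForm.finrank_orthogonal hnd F
      rw [← hF] at h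
      have h2 := Submodule.finrank_le F
      rw [hdim] at h h2
      omega
    have hsupEF : E ⊔ F = ⊤ := by
      apply Submodule.eq_top_of_finrank_eq
      have h2 := Submodule.finrank_sup_add_finrank_inf_eq E F
      rw [hEF, finrank_bot] at h2
      rw [hdim]
      omega
    -- image side
    have hisoF' : ∀ x ∈ F.map (S : V →ₗ[ℝ] V'), ∀ y ∈ F.map (S : V →ₗ[ℝ] V'), ω' x y = 0 := by
      rintro x ⟨ux, hux, rfl⟩ y ⟨uy, huy, rfl⟩
      simp only [LinearEquiv.coe_coe]
      rw [hS]
      exact hisoF ux hux uy huy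
    have hsup' : E.map (S : V →ₗ[ℝ] V') ⊔ F.map (S : V →ₗ[ℝ] V') = ⊤ := by
      rw [← Submodule.map_sup, hsupEF, Submodule.map_top, LinearEquiv.range]
    have hinf' : E.map (S : V →ₗ[ℝ] V') ⊓ F.map (S : V →ₗ[ℝ] V') = ⊥ := by
      rw [← Submodule.map_inf (S : V →ₗ[ℝ] V') S.injective, hEF, Submodule.map_bot]
    -- nontrivial vectors
    have hFbot : F ≠ ⊥ := by
      intro hFb
      apply hEbot
      have hTopBot : (⊥ : Submodule ℝ V) = ⊤ := by
        rw [← hFb, hF, hFb]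
        ext x
        simp [LinearMap.BilinForm.mem_orthogonal_iff]
      rw [← le_bot_iff, hTopBot]
      exact le_top
    obtain ⟨u₀, hu₀E, hu₀0⟩ := Submodule.exists_mem_ne_zero_of_ne_bot hEbot
    obtain ⟨v₀, hv₀F, hv₀0⟩ := Submodule.exists_mem_ne_zero_of_ne_bot hFbot
    have hSu₀ : S u₀ ≠ 0 := fun h => hu₀0 (by simpa using congrArg S.symm h)
    have hSv₀ : S v₀ ≠ 0 := fun h => hv₀0 (by simpa using congrArg S.symm h)
    have hSu₀E' : S u₀ ∈ E.map (S : V →ₗ[ℝ] V') := ⟨u₀, hu₀E, rfl⟩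
    have hSv₀F' : S v₀ ∈ F.map (S : V →ₗ[ℝ] V') := ⟨v₀, hv₀F, rfl⟩
    -- positivity of sines
    have hαpos : 0 < α := hα ▸ angleSS_pos hEF hu₀E hu₀0 hv₀F hv₀0
    have hαle : α ≤ Real.pi / 2 := by
      have h1 : angleSS E F ≤ angle u₀ v₀ := angleSS_le hu₀E hv₀F hu₀0 hv₀0
      have h2 : angleSS E F ≤ angle u₀ (-v₀) :=
        angleSS_le hu₀E (F.neg_mem hv₀F) hu₀0 (neg_ne_zero.mpr hv₀0)
      rw [angle_neg_right] at h2
      rw [hα]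
      linarith
    have hsinα : 0 < Real.sin α :=
      Real.sin_pos_of_pos_of_lt_pi hαpos (lt_of_le_of_lt hαle (by linarith [Real.pi_pos]))
    have hβpos : 0 < β := hβ ▸ angleSS_pos hinf' hSu₀E' hSu₀ hSv₀F' hSv₀
    have hβle : β ≤ Real.pi / 2 := by
      have h1 : angleSS (E.map (S : V →ₗ[ℝ] V')) (F.map (S : V →ₗ[ℝ] V')) ≤ angle (S u₀) (S v₀) :=
        angleSS_le hSu₀E' hSv₀F' hSu₀ hSv₀
      have h2 : angleSS (E.map (S : V →ₗ[ℝ] V')) (F.map (S : V →ₗ[ℝ] V'))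
          ≤ angle (S u₀) (-(S v₀)) :=
        angleSS_le hSu₀E' ((F.map (S : V →ₗ[ℝ] V')).neg_mem hSv₀F') hSu₀
          (neg_ne_zero.mpr hSv₀)
      rw [angle_neg_right] at h2
      rw [hβ]
      linarith
    have hsinβ : 0 < Real.sin β :=
      Real.sin_pos_of_pos_of_lt_pi hβpos (lt_of_le_of_lt hβle (by linarith [Real.pi_pos]))
    set AN := opN ((S.submoduleMap E).symm : ↥(E.map (S : V →ₗ[ℝ] V')) →ₗ[ℝ] E) with hANdef
    set BN := opN ((S.submoduleMap F) : F →ₗ[ℝ] ↥(F.map (S : V →ₗ[ℝ] V'))) with hBNdef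
    have hEbd : ∀ u ∈ E, ‖u‖ ≤ AN * ‖S u‖ := fun u hu => norm_le_opN_symm_mul S E u hu
    have hFbd : ∀ v ∈ F, ‖S v‖ ≤ BN * ‖v‖ := fun v hv => norm_opN_map_mul S F v hv
    -- positivity of C, AN, BN
    have hJu₀0 : 0 < ‖J u₀‖ :=
      norm_pos_iff.mpr (fun h => hu₀0 (by simpa using congrArg J.symm h))
    have hCpos : 0 < C := by
      nlinarith [hJapp u₀, norm_pos_iff.mpr hu₀0, hJu₀0, norm_nonneg u₀]
    have hANpos : 0 < AN := by
      nlinarith [hEbd u₀ hu₀E, norm_pos_iff.mpr hu₀0, norm_nonneg (S u₀)]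
    have hBNpos : 0 < BN := by
      nlinarith [hFbd v₀ hv₀F, norm_pos_iff.mpr hSv₀, norm_nonneg v₀]
    constructor
    · -- lower bound
      have hkey1 : ∀ u ∈ E, Real.sin α * ‖u‖ ≤ (C ^ 2 * BN) * ‖S u‖ := by
        intro u hu
        by_cases hu0 : u = 0
        · simp [hu0]
        · obtain ⟨b, hbF, hb0, hωub, hbsin⟩ := core_lemma ω J hJ E F hisoE hsupEF hu hu0
          rw [← hα] at hbsin
          have k1 : ‖J u‖ ^ 2 ≤ (C * ‖S u‖) * (BN * ‖b‖) := by
            calc ‖J u‖ ^ 2 = ω u b := hωub.symm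
              _ = ω' (S u) (S b) := (hS u b).symm
              _ = ⟪J' (S u), S b⟫ := hJ' _ _
              _ ≤ ‖J' (S u)‖ * ‖S b‖ := real_inner_le_norm _ _
              _ ≤ (C * ‖S u‖) * (BN * ‖b‖) :=
                  mul_le_mul (hJ'app _) (hFbd b hbF) (norm_nonneg _)
                    (mul_nonneg hC0 (norm_nonneg _))
          have hJu0 : 0 < ‖J u‖ :=
            norm_pos_iff.mpr (fun h => hu0 (by simpa using congrArg J.symm h))
          have k2 : Real.sin α * ‖J u‖ ≤ C * BN * ‖S u‖ := by
            have l1 : Real.sin α * ‖J u‖ ^ 2 ≤ Real.sin α * ((C * ‖S u‖) * (BN * ‖b‖)) :=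
              mul_le_mul_of_nonneg_left k1 hsinα.le
            have l2 : (C * ‖S u‖ * BN) * (‖b‖ * Real.sin α) ≤ (C * ‖S u‖ * BN) * ‖J u‖ :=
              mul_le_mul_of_nonneg_left hbsin
                (mul_nonneg (mul_nonneg hC0 (norm_nonneg _)) hBNpos.le)
            nlinarith [l1, l2, hJu0]
          have k3 : Real.sin α * ‖u‖ ≤ Real.sin α * (C * ‖J u‖) :=
            mul_le_mul_of_nonneg_left (hJinv u) hsinα.le
          have k4 : C * (Real.sin α * ‖J u‖) ≤ C * (C * BN * ‖S u‖) :=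
            mul_le_mul_of_nonneg_left k2 hC0
          nlinarith [k3, k4]
      have hANle : AN ≤ (C ^ 2 * BN) / Real.sin α := by
        rw [hANdef]
        apply opN_symm_le S E
          (div_nonneg (mul_nonneg (pow_nonneg hC0 2) hBNpos.le) hsinα.le)
        intro u hu
        rw [div_mul_eq_mul_div, le_div_iff₀ hsinα]
        nlinarith [hkey1 u hu]
      rw [show (C ^ 2)⁻¹ * Real.sin α = Real.sin α / C ^ 2 by ring,
        show AN⁻¹ * BN = BN / AN by ring]
      rw [div_le_div_iff₀ (by positivity) hANpos]
      have h := mul_le_mul_of_nonneg_left hANle hsinα.le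
      have h2 : Real.sin α * ((C ^ 2 * BN) / Real.sin α) = C ^ 2 * BN := by
        field_simp
      nlinarith [h, h2]
    · -- upper bound
      have hkey2 : ∀ v ∈ F, Real.sin β * ‖S v‖ ≤ (C ^ 2 * AN) * ‖v‖ := by
        intro v hv
        by_cases hv0 : v = 0
        · simp [hv0]
        · have hSvF' : S v ∈ F.map (S : V →ₗ[ℝ] V') := ⟨v, hv, rfl⟩
          have hSv0 : S v ≠ 0 := fun h => hv0 (by simpa using congrArg S.symm h)
          obtain ⟨b', hb'E', hb'0, hωb', hb'sin⟩ :=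
            core_lemma ω' J' hJ' (F.map (S : V →ₗ[ℝ] V')) (E.map (S : V →ₗ[ℝ] V'))
              hisoF' (by rw [sup_comm]; exact hsup') hSvF' hSv0
          rw [angleSS_comm, ← hβ] at hb'sin
          obtain ⟨u, huE, hSu⟩ := hb'E'
          have hu0 : u ≠ 0 := by
            intro h
            apply hb'0
            rw [← hSu, h]
            simp
          have hb'Su : b' = S u := by rw [← hSu]; rfl
          have k1 : ‖J' (S v)‖ ^ 2 ≤ (C * ‖v‖) * (AN * ‖S u‖) := by
            calc ‖J' (S v)‖ ^ 2 = ω' (S v) b' := hωb'.symm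
              _ = ω' (S v) (S u) := by rw [hb'Su]
              _ = ω v u := hS v u
              _ = ⟪J v, u⟫ := hJ v u
              _ ≤ ‖J v‖ * ‖u‖ := real_inner_le_norm _ _
              _ ≤ (C * ‖v‖) * (AN * ‖S u‖) :=
                  mul_le_mul (hJapp v) (hEbd u huE) (norm_nonneg _)
                    (mul_nonneg hC0 (norm_nonneg _))
          have hJ'Sv0 : 0 < ‖J' (S v)‖ :=
            norm_pos_iff.mpr (fun h => hSv0 (by simpa using congrArg J'.symm h))
          have hb'sin2 : ‖S u‖ * Real.sin β ≤ ‖J' (S v)‖ := by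
            rw [← hb'Su]
            exact hb'sin
          have k2 : Real.sin β * ‖J' (S v)‖ ≤ C * AN * ‖v‖ := by
            have l1 : Real.sin β * ‖J' (S v)‖ ^ 2 ≤ Real.sin β * ((C * ‖v‖) * (AN * ‖S u‖)) :=
              mul_le_mul_of_nonneg_left k1 hsinβ.le
            have l2 : (C * ‖v‖ * AN) * (‖S u‖ * Real.sin β) ≤ (C * ‖v‖ * AN) * ‖J' (S v)‖ :=
              mul_le_mul_of_nonneg_left hb'sin2
                (mul_nonneg (mul_nonneg hC0 (norm_nonneg _)) hANpos.le)
            nlinarith [l1, l2, hJ'Sv0]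
          have k3 : Real.sin β * ‖S v‖ ≤ Real.sin β * (C * ‖J' (S v)‖) :=
            mul_le_mul_of_nonneg_left (hJ'inv (S v)) hsinβ.le
          have k4 : C * (Real.sin β * ‖J' (S v)‖) ≤ C * (C * AN * ‖v‖) :=
            mul_le_mul_of_nonneg_left k2 hC0
          nlinarith [k3, k4]
      have hBNle : BN ≤ (C ^ 2 * AN) / Real.sin β := by
        rw [hBNdef]
        apply opN_map_le S F
          (div_nonneg (mul_nonneg (pow_nonneg hC0 2) hANpos.le) hsinβ.le)
        intro v hv
        rw [div_mul_eq_mul_div, le_div_iff₀ hsinβ]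
        nlinarith [hkey2 v hv]
      rw [show AN⁻¹ * BN = BN / AN by ring,
        show C ^ 2 * (Real.sin β)⁻¹ = C ^ 2 / Real.sin β by ring]
      rw [div_le_div_iff₀ hANpos hsinβ]
      have h := mul_le_mul_of_nonneg_left hBNle hsinβ.le
      have h2 : Real.sin β * ((C ^ 2 * AN) / Real.sin β) = C ^ 2 * AN := by
        field_simp
      nlinarith [h, h2]
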